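/- Let n ≥ 1 be an integer and let α be a real number with −π/2 < α < π/2. If p ∈ 𝓗[1,n] satisfies p(z) ≠ 0 for all z ∈ 𝕌, p ≢ 1, and |p(z) + z p'(z)/p(z) − 1| < (n/2 + 1)·|p(z)|·cos α for all z ∈ 𝕌, then |arg(p(z))| < π/2 − |α| for all z ∈ 𝕌. -/

import Mathlib

/-!
Put `φ = 1/p - 1`, which vanishes to order `n` at `0`. Then `(zφ)' = φ + zφ'` equals
`-(p + zp'/p - 1)/p`, so the hypothesis says `‖(zφ)'‖ ≤ M := (n/2 + 1) cos α` on the disc.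
As `(zφ)'` also vanishes to order `n`, the maximum principle improves this to
`‖(zφ)'(z)‖ ≤ M‖z‖ⁿ`, and integrating along `[0, z]` gives `‖φ z‖ ≤ M‖z‖ⁿ/(n + 1) < cos α`.
Thus `1/p` lies in the disc of radius `cos α = sin (π/2 - |α|)` about `1`, which lies in the
sector `|arg w| < π/2 - |α|`; and `|arg (1/p)| = |arg p|`.
-/

open Metric Set Filter Topology

lemma exists_eq_pow_mul_of_iteratedDeriv_eq_zero {q : ℂ → ℂ} {U : Set ℂ} {n : ℕ}
    (hU : IsOpen U) (hU0 : 0 ∈ U) (hq : DifferentiableOn ℂ q U)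
    (hq0 : ∀ k < n, iteratedDeriv k q 0 = 0) :
    ∃ r : ℂ → ℂ, DifferentiableOn ℂ r U ∧ ∀ z, q z = z ^ n * r z := by
  obtain ⟨r, hr0, hqr⟩ := (hq.analyticAt (hU.mem_nhds hU0)).exists_eq_sum_add_pow_mul n
  have hsum : ∀ z : ℂ, ∑ k ∈ Finset.range n, (z ^ k / k.factorial) • iteratedDeriv k q 0 = 0 :=
    fun z => Finset.sum_eq_zero fun k hk => by rw [hq0 k (Finset.mem_range.1 hk), smul_zero]
  replace hqr : ∀ z, q z = z ^ n * r z := fun z => by rw [hqr z, hsum, zero_add, smul_eq_mul]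
  refine ⟨r, fun z hz => ?_, hqr⟩
  rcases eq_or_ne z 0 with rfl | hz0
  · exact hr0.differentiableAt.differentiableWithinAt
  · have hr : (fun w => q w / w ^ n) =ᶠ[𝓝 z] r := by
      filter_upwards [isOpen_ne.mem_nhds hz0] with w hw
      rw [hqr w, mul_div_cancel_left₀ _ (pow_ne_zero n hw)]
    exact (((hq.differentiableAt (hU.mem_nhds hz)).div (differentiableAt_pow n)
      (pow_ne_zero n hz0)).congr_of_eventuallyEq hr.symm).differentiableWithinAt

lemma norm_le_of_norm_pow_mul_le {g : ℂ → ℂ} {C : ℝ} (m : ℕ)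
    (hg : DifferentiableOn ℂ g (ball 0 1)) (hC : ∀ z ∈ ball (0 : ℂ) 1, ‖z ^ m * g z‖ ≤ C) :
    ∀ z ∈ ball (0 : ℂ) 1, ‖g z‖ ≤ C := by
  intro z hz
  have hz1 : ‖z‖ < 1 := mem_ball_zero_iff.1 hz
  -- maximum modulus on the circle of radius `r`, then `r → 1`
  have hr : ∀ r ∈ Ioo ‖z‖ 1, ‖g z‖ * r ^ m ≤ C := by
    rintro r ⟨hzr, hr1⟩
    have hr0 : 0 < r := (norm_nonneg z).trans_lt hzr
    have hd : DiffContOnCl ℂ g (ball 0 r) := by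
      refine DifferentiableOn.diffContOnCl ?_
      rw [closure_ball 0 hr0.ne']
      exact hg.mono (closedBall_subset_ball hr1)
    have hsphere : ∀ w ∈ frontier (ball (0 : ℂ) r), ‖g w‖ ≤ C / r ^ m := by
      intro w hw
      rw [frontier_ball 0 hr0.ne', mem_sphere_zero_iff_norm] at hw
      have := hC w (mem_ball_zero_iff.2 (hw ▸ hr1))
      rwa [norm_mul, norm_pow, hw, mul_comm, ← le_div_iff₀ (pow_pos hr0 m)] at this
    rw [← le_div_iff₀ (pow_pos hr0 m)]
    exact Complex.norm_le_of_forall_mem_frontier_norm_le isBounded_ball hd hsphere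
      (subset_closure (mem_ball_zero_iff.2 hzr))
  have hlim : Tendsto (fun r : ℝ => ‖g z‖ * r ^ m) (𝓝[<] 1) (𝓝 ‖g z‖) := by
    have hcont : Continuous fun r : ℝ => ‖g z‖ * r ^ m := by fun_prop
    simpa using (hcont.tendsto 1).mono_left nhdsWithin_le_nhds
  exact le_of_tendsto hlim (eventually_of_mem (Ioo_mem_nhdsLT hz1) hr)

lemma norm_add_mul_deriv_le_mul_pow {φ g : ℂ → ℂ} {n : ℕ} {M : ℝ}
    (hg : DifferentiableOn ℂ g (ball 0 1)) (hφ : ∀ z ∈ ball (0 : ℂ) 1, φ z = z ^ n * g z)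
    (hM : ∀ z ∈ ball (0 : ℂ) 1, ‖φ z + z * deriv φ z‖ ≤ M) :
    ∀ z ∈ ball (0 : ℂ) 1, ‖φ z + z * deriv φ z‖ ≤ M * ‖z‖ ^ n := by
  set G : ℂ → ℂ := fun z => ((n : ℂ) + 1) * g z + z * deriv g z with hG
  have hfac : ∀ z ∈ ball (0 : ℂ) 1, φ z + z * deriv φ z = z ^ n * G z := by
    intro z hz
    have hφz : (fun w => w ^ n * g w) =ᶠ[𝓝 z] φ :=
      eventually_of_mem (isOpen_ball.mem_nhds hz) fun w hw => (hφ w hw).symm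
    have hgz := (hg.differentiableAt (isOpen_ball.mem_nhds hz)).hasDerivAt
    rw [(((hasDerivAt_pow n z).mul hgz).congr_of_eventuallyEq hφz.symm).deriv, hφ z hz]
    cases n with
    | zero => simp [hG]
    | succ n => simp only [hG, pow_succ]; push_cast; ring
  have hGd : DifferentiableOn ℂ G (ball 0 1) :=
    ((differentiableOn_const _).mul hg).add (differentiableOn_id.mul (hg.deriv isOpen_ball))
  intro z hz
  have hGz := norm_le_of_norm_pow_mul_le n hGd (fun w hw => hfac w hw ▸ hM w hw) z hz
  rw [hfac z hz, norm_mul, norm_pow, mul_comm]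
  exact mul_le_mul_of_nonneg_right hGz (by positivity)

lemma norm_le_of_norm_deriv_le_mul_pow {E : Type*} [NormedAddCommGroup E] [NormedSpace ℝ E]
    {f f' : ℝ → E} {K : ℝ} (n : ℕ) (hf : ∀ t ∈ Icc (0 : ℝ) 1, HasDerivAt f (f' t) t)
    (hf0 : f 0 = 0) (hf' : ∀ t ∈ Ico (0 : ℝ) 1, ‖f' t‖ ≤ K * t ^ n) :
    ∀ t ∈ Icc (0 : ℝ) 1, ‖f t‖ ≤ K * t ^ (n + 1) / (n + 1) := by
  refine image_norm_le_of_norm_deriv_right_le_deriv_boundary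
    (fun t ht => (hf t ht).continuousAt.continuousWithinAt)
    (fun t ht => (hf t (Ico_subset_Icc_self ht)).hasDerivWithinAt) (by simp [hf0])
    (fun t => ?_) hf'
  refine (((hasDerivAt_pow (n + 1) t).const_mul K).div_const ((n : ℝ) + 1)).congr_deriv ?_
  push_cast
  field_simp

lemma norm_le_of_norm_add_mul_deriv_le_mul_pow {φ : ℂ → ℂ} {n : ℕ} {M : ℝ}
    (hφ : DifferentiableOn ℂ φ (ball 0 1))
    (hM : ∀ z ∈ ball (0 : ℂ) 1, ‖φ z + z * deriv φ z‖ ≤ M * ‖z‖ ^ n) :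
    ∀ z ∈ ball (0 : ℂ) 1, ‖φ z‖ ≤ M * ‖z‖ ^ n / (n + 1) := by
  intro z hz
  have hseg : ∀ t ∈ Icc (0 : ℝ) 1, (t : ℂ) * z ∈ ball (0 : ℂ) 1 := by
    rintro t ⟨ht0, ht1⟩
    rw [mem_ball_zero_iff, norm_mul, Complex.norm_real, Real.norm_of_nonneg ht0]
    exact (mul_le_of_le_one_left (norm_nonneg z) ht1).trans_lt (mem_ball_zero_iff.1 hz)
  have hderiv : ∀ t ∈ Icc (0 : ℝ) 1, HasDerivAt (fun s : ℝ => (s : ℂ) * φ (s * z))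
      (φ (t * z) + t * z * deriv φ (t * z)) t := by
    intro t ht
    have hφt := (hφ.differentiableAt (isOpen_ball.mem_nhds (hseg t ht))).hasDerivAt
    have := (hasDerivAt_id (t : ℂ)).mul (hφt.comp (t : ℂ) ((hasDerivAt_id (t : ℂ)).mul_const z))
    refine HasDerivAt.comp_ofReal (this.congr_deriv ?_)
    simp only [id, Function.comp_apply]
    ring
  have hbound : ∀ t ∈ Ico (0 : ℝ) 1,
      ‖φ (t * z) + t * z * deriv φ (t * z)‖ ≤ M * ‖z‖ ^ n * t ^ n := by
    intro t ht
    have ht' := Ico_subset_Icc_self ht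
    refine (hM _ (hseg t ht')).trans_eq ?_
    rw [norm_mul, Complex.norm_real, Real.norm_of_nonneg ht'.1]
    ring
  simpa using norm_le_of_norm_deriv_le_mul_pow n hderiv (by simp) hbound 1 (by simp)

lemma abs_sin_arg_le_norm_sub_one (w : ℂ) : |Real.sin w.arg| ≤ ‖w - 1‖ := by
  rcases eq_or_ne w 0 with rfl | hw
  · simp
  -- `(w - 1) * conj w = ‖w‖² - conj w` has imaginary part `w.im`
  have him : ((w - 1) * (starRingEnd ℂ) w).im = w.im := by
    simp only [Complex.mul_im, Complex.sub_re, Complex.one_re, Complex.conj_im, Complex.sub_im,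
      Complex.one_im, Complex.conj_re]
    ring
  rw [Complex.sin_arg, abs_div, abs_norm, div_le_iff₀ (norm_pos_iff.2 hw), ← him,
    ← Complex.norm_conj w, ← norm_mul]
  exact Complex.abs_im_le_norm _

lemma abs_arg_lt_of_norm_sub_one_lt_sin {w : ℂ} {β : ℝ} (hβ : -(Real.pi / 2) ≤ β)
    (hw : ‖w - 1‖ < Real.sin β) : |w.arg| < β := by
  by_contra! hβw
  have hre : 0 ≤ w.re := by
    have := Complex.abs_re_le_norm (w - 1)
    rw [Complex.sub_re, Complex.one_re, abs_le] at this
    linarith [Real.sin_le_one β]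
  have harg : |w.arg| ≤ Real.pi / 2 := Complex.abs_arg_le_pi_div_two_iff.2 hre
  have hsin : Real.sin β ≤ |Real.sin w.arg| := by
    rw [Real.abs_sin_eq_sin_abs_of_abs_le_pi (by linarith [Real.pi_pos])]
    exact Real.sin_le_sin_of_le_of_le_pi_div_two hβ harg hβw
  linarith [abs_sin_arg_le_norm_sub_one w]

lemma inv_sub_one_add_mul_deriv {p : ℂ → ℂ} {z : ℂ} (hp : DifferentiableAt ℂ p z)
    (hpz : p z ≠ 0) :
    (p z)⁻¹ - 1 + z * deriv (fun w => (p w)⁻¹ - 1) z =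
      -((p z + z * deriv p z / p z - 1) / p z) := by
  have hd : HasDerivAt (fun w => (p w)⁻¹ - 1) (-deriv p z / p z ^ 2) z :=
    (hp.hasDerivAt.inv hpz).sub_const 1
  rw [hd.deriv]
  field_simp
  ring

lemma iteratedDeriv_sub_one_eq_zero {p : ℂ → ℂ} {n : ℕ} (hp0 : p 0 = 1)
    (hpcoef : ∀ k : ℕ, 1 ≤ k → k < n → iteratedDeriv k p 0 = 0) :
    ∀ k < n, iteratedDeriv k (fun z => p z - 1) 0 = 0 := by
  intro k hk
  rcases k.eq_zero_or_pos with rfl | hk0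
  · simp [hp0]
  · simpa [sub_eq_neg_add, iteratedDeriv_const_add hk0] using hpcoef k hk0 hk

theorem strongly_caratheodory_of_modulus_bound_general
    (n : ℕ) (hn : 1 ≤ n) (α : ℝ) (hα₁ : -(Real.pi / 2) < α) (hα₂ : α < Real.pi / 2)
    (p : ℂ → ℂ)
    (hp : DifferentiableOn ℂ p (ball (0 : ℂ) 1))
    (hp0 : p 0 = 1)
    (hpcoef : ∀ k : ℕ, 1 ≤ k → k < n → iteratedDeriv k p 0 = 0)
    (hpne0 : ∀ z ∈ ball (0 : ℂ) 1, p z ≠ 0)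
    (habs : ∀ z ∈ ball (0 : ℂ) 1,
      ‖p z + z * deriv p z / p z - 1‖ <
        ((n : ℝ) / 2 + 1) * ‖p z‖ * Real.cos α) :
    ∀ z ∈ ball (0 : ℂ) 1, |(p z).arg| < Real.pi / 2 - |α| := by
  have hcos : 0 < Real.cos α := Real.cos_pos_of_mem_Ioo ⟨hα₁, hα₂⟩
  obtain ⟨r, hr, hpr⟩ := exists_eq_pow_mul_of_iteratedDeriv_eq_zero isOpen_ball
    (mem_ball_self one_pos) (hp.sub_const 1) (iteratedDeriv_sub_one_eq_zero hp0 hpcoef)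
  set φ : ℂ → ℂ := fun z => (p z)⁻¹ - 1
  have hφ : ∀ z ∈ ball (0 : ℂ) 1, φ z = z ^ n * (-r z / p z) := by
    intro z hz
    have := hpne0 z hz
    simp only [φ]
    field_simp
    linear_combination -hpr z
  have hφM : ∀ z ∈ ball (0 : ℂ) 1, ‖φ z + z * deriv φ z‖ ≤ ((n : ℝ) / 2 + 1) * Real.cos α := by
    intro z hz
    rw [inv_sub_one_add_mul_deriv (hp.differentiableAt (isOpen_ball.mem_nhds hz)) (hpne0 z hz),
      norm_neg, norm_div, div_le_iff₀ (norm_pos_iff.2 (hpne0 z hz))]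
    linarith [habs z hz]
  have hφ_lt : ∀ z ∈ ball (0 : ℂ) 1, ‖(p z)⁻¹ - 1‖ < Real.cos α := by
    intro z hz
    refine (norm_le_of_norm_add_mul_deriv_le_mul_pow (hp.inv hpne0 |>.sub_const 1)
      (norm_add_mul_deriv_le_mul_pow (hr.neg.div hp hpne0) hφ hφM) z hz).trans_lt ?_
    have hzn : ‖z‖ ^ n ≤ 1 := pow_le_one₀ (norm_nonneg z) (mem_ball_zero_iff.1 hz).le
    have hn' : (1 : ℝ) ≤ n := by exact_mod_cast hn
    rw [div_lt_iff₀ (by positivity)]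
    calc ((n : ℝ) / 2 + 1) * Real.cos α * ‖z‖ ^ n ≤ ((n : ℝ) / 2 + 1) * Real.cos α :=
          mul_le_of_le_one_right (by positivity) hzn
      _ < Real.cos α * (n + 1) := by nlinarith
  intro z hz
  have := abs_arg_lt_of_norm_sub_one_lt_sin (β := Real.pi / 2 - |α|)
    (by linarith [abs_lt.2 ⟨hα₁, hα₂⟩, abs_nonneg α])
    (by rw [Real.sin_pi_div_two_sub, Real.cos_abs]; exact hφ_lt z hz)
  rwa [Complex.abs_arg_inv] at this

/-- **Theorem 3.**  If `p ∈ 𝓗[1,n]` is nonvanishing, `p ≢ 1`, and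
`|p(z) + z p'(z)/p(z) - 1| < (n/2 + 1)|p(z)| cos α` on `𝕌` for some `-π/2 < α < π/2`,
then `|arg p(z)| < π/2 - |α|` on `𝕌`. -/
theorem strongly_caratheodory_of_modulus_bound
    (n : ℕ) (hn : 1 ≤ n) (α : ℝ) (hα₁ : -(Real.pi / 2) < α) (hα₂ : α < Real.pi / 2)
    (p : ℂ → ℂ)
    (hp : DifferentiableOn ℂ p (ball (0 : ℂ) 1))
    (hp0 : p 0 = 1)
    (hpcoef : ∀ k : ℕ, 1 ≤ k → k < n → iteratedDeriv k p 0 = 0)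
    (hpne0 : ∀ z ∈ ball (0 : ℂ) 1, p z ≠ 0)
    (hpne1 : ¬ ∀ z ∈ ball (0 : ℂ) 1, p z = 1)
    (habs : ∀ z ∈ ball (0 : ℂ) 1,
      ‖p z + z * deriv p z / p z - 1‖ <
        ((n : ℝ) / 2 + 1) * ‖p z‖ * Real.cos α) :
    ∀ z ∈ ball (0 : ℂ) 1, |(p z).arg| < Real.pi / 2 - |α| :=
  strongly_caratheodory_of_modulus_bound_general n hn α hα₁ hα₂ p hp hp0 hpcoef hpne0 habs
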